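/- arXiv:1206.5352 — 3 statements merged into one kernel-verified Lean document; each statement's English description precedes it below -/
import Mathlib

section
/- Let z be an infinite word, n ≥ 2, and suppose w₁ = z[i..i+n-1] = x₁^{p₁} and w₂ = z[j..j+n-1] = x₂^{p₂} with x₁, x₂ primitive, p₁, p₂ ≥ 2, and i < j ≤ i + n/3. Then |x₁| = |x₂|. -/
/-- The factor x[i..i+n-1] of the infinite word x, as a list. -/
def factor {A : Type*} (x : ℕ → A) (i n : ℕ) : List A :=
  (List.range n).map fun t => x (i + t)

/-- The occurrence of the length-n factor at position i is novel. -/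
def novel {A : Type*} (x : ℕ → A) (i n : ℕ) : Prop :=
  ∀ j < i, factor x j n ≠ factor x i n

/-- The set of positions of novel occurrences of length-n factors. -/
def novelSet {A : Type*} (x : ℕ → A) (n : ℕ) : Set ℕ := {i | novel x i n}

/-- x^k : the word x repeated k times. -/
def wpow {A : Type*} (x : List A) : ℕ → List A
  | 0 => []
  | k + 1 => x ++ wpow x k

/-- A word is a power if it is x^k for some word x and k ≥ 2. -/
def isPower {A : Type*} (w : List A) : Prop := ∃ x k, 2 ≤ k ∧ w = wpow x k

/-- w has period p. -/
def hasPeriod {A : Type*} (w : List A) (p : ℕ) : Prop :=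
  ∀ i, i + p < w.length → w[i + p]? = w[i]?

/-- u and v are conjugate words. -/
def conjugate {A : Type*} (u v : List A) : Prop := ∃ s t, u = s ++ t ∧ v = t ++ s

/-- A nonempty word is primitive if it is not a power. -/
def primitive {A : Type*} (x : List A) : Prop := x ≠ [] ∧ ¬ isPower x

/-!
Both windows overlap on `[j, i + n)`, of length at least `2n/3`, where `z` has the two periods
`|x₁| = n/p₁` and `|x₂| = n/p₂`. If these differ then `p₁ ≠ p₂`, and the elementary inequality
`3(p₁ + p₂) ≤ 2p₁p₂ + 3` together with `n ≤ gcd(|x₁|, |x₂|) p₁ p₂` gives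
`|x₁| + |x₂| ≤ 2n/3 + gcd(|x₁|, |x₂|)`. By the Fine–Wilf theorem the overlap then has period
`g = gcd(|x₁|, |x₂|)`. The overlap contains an occurrence of the longer root (the first block
of `w₂` or the last block of `w₁`), which thus has the proper period `g` dividing its length,
so it is a power.
-/

section

variable {A : Type*}

theorem length_wpow (x : List A) (k : ℕ) : (wpow x k).length = k * x.length := by
  induction k with
  | zero => simp [wpow]
  | succ k ih => simp only [wpow, List.length_append, ih]; ring

@[simp]
theorem length_factor (z : ℕ → A) (a n : ℕ) : (factor z a n).length = n := by
  simp [factor]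

@[simp]
theorem getElem_factor (z : ℕ → A) (a n t : ℕ) (ht : t < (factor z a n).length) :
    (factor z a n)[t] = z (a + t) := by
  simp [factor]

theorem factor_add (z : ℕ → A) (a m n : ℕ) :
    factor z a (m + n) = factor z a m ++ factor z (a + m) n := by
  simp [factor, List.range_add, Nat.add_assoc]

theorem factor_eq_wpow_iff {z : ℕ → A} {x : List A} {a k : ℕ} :
    factor z a (k * x.length) = wpow x k ↔
      ∀ m < k, factor z (a + m * x.length) x.length = x := by
  induction k generalizing a with
  | zero => simp [factor, wpow]
  | succ k ih =>
    rw [Nat.succ_mul, Nat.add_comm, factor_add, wpow]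
    constructor
    · intro h m hm
      obtain ⟨h₀, hrest⟩ := List.append_inj h (length_factor ..)
      rcases m with _ | m
      · simpa using h₀
      · simpa [Nat.succ_mul, Nat.add_assoc, Nat.add_comm x.length] using
          ih.1 hrest m (by omega)
    · intro h
      congr 1
      · simpa using h 0 (by omega)
      · refine ih.2 fun m hm => ?_
        simpa [Nat.succ_mul, Nat.add_assoc, Nat.add_comm x.length] using h (m + 1) (by omega)

def PeriodicOn (z : ℕ → A) (a b p : ℕ) : Prop :=
  ∀ t, a ≤ t → t + p < b → z (t + p) = z t

namespace PeriodicOn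

variable {z : ℕ → A} {a b p q : ℕ}

theorem mono (h : PeriodicOn z a b p) {a' b' : ℕ} (ha : a ≤ a') (hb : b' ≤ b) :
    PeriodicOn z a' b' p :=
  fun t ht htb => h t (ha.trans ht) (by omega)

theorem apply_add_mul (h : PeriodicOn z a b p) {s : ℕ} (hs : a ≤ s) :
    ∀ {k : ℕ}, s + k * p < b → z (s + k * p) = z s
  | 0, _ => by simp
  | k + 1, hk => by
    rw [Nat.succ_mul, ← Nat.add_assoc] at hk ⊢
    rw [h _ (by omega) hk]
    exact h.apply_add_mul hs (by omega)

theorem apply_eq_of_modEq (h : PeriodicOn z a b p) {s t : ℕ} (hs : a ≤ s) (ht : a ≤ t)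
    (hsb : s < b) (htb : t < b) (hst : s ≡ t [MOD p]) : z s = z t := by
  wlog hle : s ≤ t generalizing s t
  · exact (this ht hs htb hsb hst.symm (by omega)).symm
  obtain ⟨k, hk⟩ := (Nat.modEq_iff_dvd' hle).1 hst
  have : t = s + k * p := by rw [Nat.mul_comm, ← hk]; omega
  subst this
  exact (h.apply_add_mul hs htb).symm

theorem factor_add_mul (h : PeriodicOn z a b p) {s k n : ℕ} (hs : a ≤ s)
    (hn : s + k * p + n ≤ b) : factor z (s + k * p) n = factor z s n := by
  refine List.ext_getElem (by simp) fun r hr _ => ?_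
  simp only [getElem_factor]
  rw [Nat.add_right_comm]
  exact h.apply_add_mul (by omega) (by simp at hr; omega)

theorem sub (hp : PeriodicOn z a b p) (hq : PeriodicOn z a b q) (hpq : p ≤ q) :
    PeriodicOn z a (b - p) (q - p) := fun t ht htb => by
  rw [← hp _ (by omega) (by omega), Nat.add_assoc, Nat.sub_add_cancel hpq, hq t ht (by omega)]

theorem extend (hp : PeriodicOn z a b p) {b' g : ℕ} (hg : PeriodicOn z a b' g) (hp0 : 0 < p)
    (hgp : g ∣ p) (hpb : a + p ≤ b') : PeriodicOn z a b g := by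
  rcases le_or_gt b b' with hbb | hbb
  · exact hg.mono le_rfl hbb
  intro t ht htb
  -- move `t` and `t + g` into `[a, a + p)` along multiples of `p`, where period `g` is known
  set r : ℕ → ℕ := fun s => a + (s - a) % p
  have hr : ∀ s, a ≤ s → r s ≡ s [MOD p] := fun s hs => by
    simpa [r, Nat.add_sub_cancel' hs] using (Nat.mod_modEq (s - a) p).add_left a
  have hra : ∀ s, a ≤ r s ∧ r s < a + p := fun s =>
    ⟨Nat.le_add_right _ _, by simp [r, Nat.mod_lt _ hp0]⟩
  have hrt := hr t ht
  have hrtg := hr (t + g) (by omega)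
  obtain ⟨hrt₁, hrt₂⟩ := hra t
  obtain ⟨hrtg₁, hrtg₂⟩ := hra (t + g)
  rw [hp.apply_eq_of_modEq (by omega) hrtg₁ htb (by omega) hrtg.symm,
    hp.apply_eq_of_modEq ht hrt₁ (by omega) (by omega) hrt.symm]
  refine hg.apply_eq_of_modEq hrtg₁ hrt₁ (by omega) (by omega) ?_
  exact (hrtg.of_dvd hgp).trans ((Nat.add_modEq_right).trans (hrt.of_dvd hgp).symm)

/-- The Fine–Wilf theorem. -/
theorem gcd (hp : PeriodicOn z a b p) (hq : PeriodicOn z a b q) (hp0 : 0 < p) (hq0 : 0 < q)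
    (hb : a + p + q ≤ b + Nat.gcd p q) : PeriodicOn z a b (Nat.gcd p q) := by
  induction hs : p + q using Nat.strong_induction_on generalizing p q b with
  | _ s ih =>
  wlog hpq : p ≤ q generalizing p q
  · rw [Nat.gcd_comm] at hb ⊢
    exact this hq hp hq0 hp0 (by omega) (by omega) (by omega)
  rcases hpq.eq_or_lt with rfl | hlt
  · rwa [Nat.gcd_self]
  have hg : Nat.gcd p (q - p) = Nat.gcd p q := by
    rw [← Nat.gcd_sub_self_right hpq]
  have hgq : Nat.gcd p q ≤ q - p := Nat.le_of_dvd (by omega) (hg ▸ Nat.gcd_dvd_right _ _)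
  have hsub := ih q (by omega) (hp.mono le_rfl (Nat.sub_le b p)) (hp.sub hq hpq) hp0
    (by omega) (by omega) (by omega)
  rw [hg] at hsub
  exact hp.extend hsub hp0 (Nat.gcd_dvd_left p q) (by omega)

end PeriodicOn

theorem periodicOn_of_factor_eq_wpow {z : ℕ → A} {x : List A} {a n k : ℕ}
    (h : factor z a n = wpow x k) : PeriodicOn z a (a + n) x.length := by
  have hn : n = k * x.length := by simpa [length_wpow] using congrArg List.length h
  subst hn
  have hblock := factor_eq_wpow_iff.1 h
  intro t ht htb
  set q := x.length
  rcases Nat.eq_zero_or_pos q with hq | hq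
  · simp [hq]
  obtain ⟨m, r, hr, rfl⟩ : ∃ m r, r < q ∧ t = a + m * q + r :=
    ⟨(t - a) / q, (t - a) % q, Nat.mod_lt _ hq, by have := Nat.div_add_mod' (t - a) q; omega⟩
  have hmk : m + 1 < k := by
    by_contra! hk
    have := Nat.mul_le_mul_right q hk
    rw [Nat.succ_mul] at this
    omega
  have hletter : ∀ l < k, z (a + l * q + r) = x[r] := fun l hl => by
    simp [← hblock l hl]
  rw [show a + m * q + r + q = a + (m + 1) * q + r by rw [Nat.succ_mul]; omega,
    hletter _ hmk, hletter _ (by omega)]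

theorem not_primitive_factor {z : ℕ → A} {a n g : ℕ} (hg : PeriodicOn z a (a + n) g)
    (hgn : g ∣ n) (hlt : g < n) : ¬ primitive (factor z a n) := by
  obtain ⟨k, rfl⟩ := hgn
  rintro ⟨-, hnp⟩
  refine hnp ⟨factor z a g, k, ?_, ?_⟩
  · by_contra! hk
    interval_cases k <;> simp at hlt
  · have hpow := (factor_eq_wpow_iff (z := z) (x := factor z a g) (a := a) (k := k)).2
    rw [length_factor] at hpow
    rw [Nat.mul_comm]
    exact hpow fun m hm => hg.factor_add_mul le_rfl (by nlinarith)

end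

theorem three_mul_add_le_two_mul_mul_add_three {a b : ℕ} (ha : 2 ≤ a) (hb : 2 ≤ b)
    (hab : a ≠ b) : 3 * (a + b) ≤ 2 * (a * b) + 3 := by
  wlog hlt : a < b generalizing a b
  · have := this hb ha hab.symm (by omega)
    rwa [Nat.add_comm b, Nat.mul_comm b] at this
  rcases ha.eq_or_lt with rfl | ha3
  · omega
  · nlinarith

theorem three_mul_add_le_of_mul_eq {n p₁ p₂ q₁ q₂ : ℕ} (h₁ : p₁ * q₁ = n)
    (h₂ : p₂ * q₂ = n) (hp₁ : 2 ≤ p₁) (hp₂ : 2 ≤ p₂) (hq : q₁ ≠ q₂) :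
    3 * (q₁ + q₂) ≤ 2 * n + 3 * Nat.gcd q₁ q₂ := by
  have hp : p₁ ≠ p₂ := by
    rintro rfl
    exact hq (Nat.eq_of_mul_eq_mul_left (by omega) (h₁.trans h₂.symm))
  have hg : 0 < Nat.gcd q₁ q₂ :=
    Nat.pos_of_ne_zero fun h => hq (by rw [Nat.gcd_eq_zero_iff] at h; omega)
  -- `n` divides `q₁ p₁ p₂` and `q₂ p₁ p₂`, hence their gcd `gcd q₁ q₂ * p₁ p₂`
  have hn : n ≤ Nat.gcd q₁ q₂ * (p₁ * p₂) := by
    refine Nat.le_of_dvd (by positivity) ?_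
    rw [← Nat.gcd_mul_right]
    exact Nat.dvd_gcd ⟨p₂, by rw [← h₁]; ring⟩ ⟨p₁, by rw [← h₂]; ring⟩
  refine Nat.le_of_mul_le_mul_right (c := p₁ * p₂) ?_ (by positivity)
  calc 3 * (q₁ + q₂) * (p₁ * p₂) = 3 * (p₁ * q₁ * p₂ + p₂ * q₂ * p₁) := by ring
    _ = n * (3 * (p₁ + p₂)) := by rw [h₁, h₂]; ring
    _ ≤ n * (2 * (p₁ * p₂) + 3) :=
        Nat.mul_le_mul_left _ (three_mul_add_le_two_mul_mul_add_three hp₁ hp₂ hp)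
    _ = 2 * n * (p₁ * p₂) + 3 * n := by ring
    _ ≤ (2 * n + 3 * Nat.gcd q₁ q₂) * (p₁ * p₂) := by nlinarith

theorem primitive_roots_same_length_general {A : Type*} (z : ℕ → A) (n i j p₁ p₂ : ℕ)
    (x₁ x₂ : List A)
    (hx₁ : primitive x₁) (hx₂ : primitive x₂)
    (hp₁ : 2 ≤ p₁) (hp₂ : 2 ≤ p₂)
    (hw₁ : factor z i n = wpow x₁ p₁) (hw₂ : factor z j n = wpow x₂ p₂)
    (hij : i < j) (hj3 : j ≤ i + n / 3) :
    x₁.length = x₂.length := by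
  have hn₁ : p₁ * x₁.length = n := by
    simpa [length_wpow] using (congrArg List.length hw₁).symm
  have hn₂ : p₂ * x₂.length = n := by
    simpa [length_wpow] using (congrArg List.length hw₂).symm
  have hle₁ : 2 * x₁.length ≤ n := hn₁ ▸ Nat.mul_le_mul_right _ hp₁
  have hle₂ : 2 * x₂.length ≤ n := hn₂ ▸ Nat.mul_le_mul_right _ hp₂
  have hpos₁ : 0 < x₁.length := List.length_pos_iff.2 hx₁.1
  have hpos₂ : 0 < x₂.length := List.length_pos_iff.2 hx₂.1
  rw [← hn₁] at hw₁
  rw [← hn₂] at hw₂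
  by_contra hne
  have hper : PeriodicOn z j (i + n) (Nat.gcd x₁.length x₂.length) :=
    ((periodicOn_of_factor_eq_wpow hw₁).mono hij.le (by omega)).gcd
      ((periodicOn_of_factor_eq_wpow hw₂).mono le_rfl (by omega)) hpos₁ hpos₂
      (by have := three_mul_add_le_of_mul_eq hn₁ hn₂ hp₁ hp₂ hne; omega)
  rcases Nat.lt_or_gt_of_ne hne with hlt | hgt
  · have hroot : factor z j x₂.length = x₂ := by
      simpa using factor_eq_wpow_iff.1 hw₂ 0 (by omega)
    exact not_primitive_factor (hper.mono le_rfl (by omega)) (Nat.gcd_dvd_right _ _)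
      ((Nat.gcd_le_left _ hpos₁).trans_lt hlt) (by rwa [hroot])
  · have hlast : (p₁ - 1) * x₁.length + x₁.length = n := by rw [Nat.sub_one_mul]; omega
    have hroot := factor_eq_wpow_iff.1 hw₁ (p₁ - 1) (by omega)
    exact not_primitive_factor
      (hper.mono (a' := i + (p₁ - 1) * x₁.length) (by omega) (by omega)) (Nat.gcd_dvd_left _ _)
      ((Nat.gcd_le_right _ hpos₂).trans_lt hgt) (by rwa [hroot])

theorem primitive_roots_same_length {A : Type*} (z : ℕ → A) (n i j p₁ p₂ : ℕ)
    (x₁ x₂ : List A) (hn : 2 ≤ n)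
    (hx₁ : primitive x₁) (hx₂ : primitive x₂)
    (hp₁ : 2 ≤ p₁) (hp₂ : 2 ≤ p₂)
    (hw₁ : factor z i n = wpow x₁ p₁) (hw₂ : factor z j n = wpow x₂ p₂)
    (hij : i < j) (hj3 : j ≤ i + n / 3) :
    x₁.length = x₂.length :=
  primitive_roots_same_length_general z n i j p₁ p₂ x₁ x₂ hx₁ hx₂ hp₁ hp₂ hw₁ hw₂ hij hj3
end

section
/- Let c be the characteristic sequence of the powers of 2, i.e., c(n) = 1 if n is a power of 2 (n ∈ {1, 2, 4, 8, …}) and c(n) = 0 otherwise. Then for every r ≥ 2, the sequence c has exactly r + 2 distinct unbordered factors of length 2^r + 1. -/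
-- The characteristic sequence of the powers of 2.
open Classical in
noncomputable def charPow2 : ℕ → ℕ := fun n =>
  if ∃ k : ℕ, n = 2 ^ k then 1 else 0

/-- A word is bordered if some nonempty word other than w itself is both a
prefix and a suffix of w. -/
def bordered {A : Type*} (w : List A) : Prop :=
  ∃ t : List A, t ≠ [] ∧ t ≠ w ∧ t <+: w ∧ t <:+ w

/-!
A factor of length `2 ^ r + 1` whose first and last letters agree has a border of length one,
so an unbordered factor starts at a power of two or ends at one, but not both.

If it starts at `2 ^ k` with `k < r` we get `r` different words; each is unbordered because a
border would have to begin at a power `2 ^ j` with `k < j ≤ r`, and then the `1` at `2 ^ (k + 1)`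
faces the `0` at `2 ^ j + 2 ^ k`. If `k > r` the factor is `1 0^(2^r)`, the factor at
`2 ^ (r + 1)`. If it ends at `2 ^ t`, then either `t ≥ r + 2` and the factor is `0^(2^r) 1`,
the factor at `3 * 2 ^ r`, or it starts at `0`, and for `r ≥ 2` it has the border `01`.
-/

section Factor

variable {A : Type*} (x : ℕ → A)

@[simp] lemma length_factor_s14 (i n : ℕ) : (factor x i n).length = n := by
  simp [factor]

variable {x}

lemma factor_eq_factor_iff {y : ℕ → A} {i j n : ℕ} :
    factor x i n = factor y j n ↔ ∀ t < n, x (i + t) = y (j + t) := by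
  refine ⟨fun h t ht => ?_, fun h => List.ext_getElem (by simp) fun t ht _ => ?_⟩
  · simpa [factor, ht] using congrArg (·[t]?) h
  · simp only [factor, List.getElem_map, List.getElem_range]
    exact h t (by simpa using ht)

lemma take_factor {i l n : ℕ} (h : l ≤ n) : (factor x i n).take l = factor x i l :=
  List.ext_getElem (by simp [h]) fun t _ _ => by simp [factor]

lemma drop_factor {i l n : ℕ} (h : l ≤ n) :
    (factor x i n).drop (n - l) = factor x (i + (n - l)) l :=
  List.ext_getElem (by simp only [List.length_drop, length_factor_s14]; omega) fun t _ _ => by simp [factor, Nat.add_assoc]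

lemma bordered_factor_iff {i n : ℕ} :
    bordered (factor x i n) ↔
      ∃ l, 0 < l ∧ l < n ∧ ∀ t < l, x (i + t) = x (i + (n - l) + t) := by
  simp_rw [← factor_eq_factor_iff]
  constructor
  · rintro ⟨t, hne, hnw, hpre, hsuf⟩
    have hl : t.length ≤ n := by simpa using hpre.length_le
    have hlt : t.length ≠ n := fun h => hnw (hpre.eq_of_length (by simp [h]))
    rw [List.prefix_iff_eq_take, take_factor hl] at hpre
    rw [List.suffix_iff_eq_drop, length_factor_s14, drop_factor hl] at hsuf
    exact ⟨t.length, List.length_pos_iff.mpr hne, by omega, hpre.symm.trans hsuf⟩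
  · rintro ⟨l, hl0, hln, heq⟩
    refine ⟨factor x i l, ?_, ?_, ?_, ?_⟩
    · simpa [← List.length_pos_iff] using hl0
    · exact fun h => by simpa [hln.ne] using congrArg List.length h
    · rw [List.prefix_iff_eq_take, length_factor_s14, take_factor hln.le]
    · rw [heq, List.suffix_iff_eq_drop, length_factor_s14, length_factor_s14, drop_factor hln.le]

lemma bordered_factor_of_apply_eq {i n : ℕ} (hn : 0 < n) (h : x i = x (i + n)) :
    bordered (factor x i (n + 1)) :=
  bordered_factor_iff.mpr ⟨1, one_pos, by omega, fun t ht => by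
    obtain rfl : t = 0 := by omega
    simpa using h⟩

end Factor

lemma charPow2_two_pow (k : ℕ) : charPow2 (2 ^ k) = 1 := if_pos ⟨k, rfl⟩

lemma charPow2_eq_one_iff {n : ℕ} : charPow2 n = 1 ↔ ∃ k, n = 2 ^ k := by
  unfold charPow2
  split_ifs with h <;> simpa using h

lemma charPow2_eq_zero_iff {n : ℕ} : charPow2 n = 0 ↔ ¬ ∃ k, n = 2 ^ k := by
  unfold charPow2
  split_ifs with h <;> simpa using h

lemma charPow2_eq_zero_of_lt_of_lt {a n : ℕ} (h₁ : 2 ^ a < n) (h₂ : n < 2 ^ (a + 1)) :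
    charPow2 n = 0 := by
  refine charPow2_eq_zero_iff.mpr ?_
  rintro ⟨k, rfl⟩
  rw [Nat.pow_lt_pow_iff_right one_lt_two] at h₁ h₂
  omega

lemma charPow2_two_pow_add {k t : ℕ} (h₀ : 0 < t) (h : t < 2 ^ k) : charPow2 (2 ^ k + t) = 0 :=
  charPow2_eq_zero_of_lt_of_lt (a := k) (by omega) (by rw [pow_succ]; omega)

lemma charPow2_two_pow_add_two_pow {j k : ℕ} (h : k < j) : charPow2 (2 ^ j + 2 ^ k) = 0 :=
  charPow2_two_pow_add (by positivity) (Nat.pow_lt_pow_right one_lt_two h)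

lemma charPow2_add_eq_zero_of_add_eq_two_pow {i r s u : ℕ} (hi : i + 2 ^ r = 2 ^ (s + 1))
    (hs : r < s) (hu : u < 2 ^ r) : charPow2 (i + u) = 0 := by
  have := Nat.pow_lt_pow_right one_lt_two hs
  rw [pow_succ] at hi
  exact charPow2_eq_zero_of_lt_of_lt (a := s) (by omega) (by rw [pow_succ]; omega)

lemma charPow2_zero : charPow2 0 = 0 :=
  charPow2_eq_zero_iff.mpr fun ⟨k, hk⟩ => (pow_pos two_pos k).ne' hk.symm

lemma three_mul_two_pow_add_two_pow (r : ℕ) : 3 * 2 ^ r + 2 ^ r = 2 ^ (r + 1 + 1) := by ring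

section Length

variable {r : ℕ}

lemma factor_charPow2_two_pow_eq {k j : ℕ} (hk : r < k) (hj : r < j) :
    factor charPow2 (2 ^ k) (2 ^ r + 1) = factor charPow2 (2 ^ j) (2 ^ r + 1) := by
  refine factor_eq_factor_iff.mpr fun t ht => ?_
  rcases Nat.eq_zero_or_pos t with rfl | ht₀
  · simp [charPow2_two_pow]
  · have := Nat.pow_lt_pow_right one_lt_two hk
    have := Nat.pow_lt_pow_right one_lt_two hj
    rw [charPow2_two_pow_add ht₀ (by omega), charPow2_two_pow_add ht₀ (by omega)]

lemma factor_charPow2_eq_of_add_eq_two_pow {i s : ℕ} (hs : r < s)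
    (hi : i + 2 ^ r = 2 ^ (s + 1)) :
    factor charPow2 i (2 ^ r + 1) = factor charPow2 (3 * 2 ^ r) (2 ^ r + 1) := by
  refine factor_eq_factor_iff.mpr fun u hu => ?_
  rcases Nat.lt_or_ge u (2 ^ r) with hu' | hu'
  · rw [charPow2_add_eq_zero_of_add_eq_two_pow hi hs hu',
      charPow2_add_eq_zero_of_add_eq_two_pow (three_mul_two_pow_add_two_pow r) r.lt_succ_self hu']
  · obtain rfl : u = 2 ^ r := by omega
    rw [hi, three_mul_two_pow_add_two_pow, charPow2_two_pow, charPow2_two_pow]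

lemma factor_charPow2_two_pow_ne {k j : ℕ} (hkj : k < j) (hk : k < r) :
    factor charPow2 (2 ^ k) (2 ^ r + 1) ≠ factor charPow2 (2 ^ j) (2 ^ r + 1) := by
  have := Nat.pow_lt_pow_right one_lt_two hk
  intro h
  have h' := factor_eq_factor_iff.mp h (2 ^ k) (by omega)
  rw [← two_mul, ← pow_succ', charPow2_two_pow, charPow2_two_pow_add_two_pow hkj] at h'
  exact one_ne_zero h'

lemma factor_charPow2_three_mul_ne (r k : ℕ) :
    factor charPow2 (3 * 2 ^ r) (2 ^ r + 1) ≠ factor charPow2 (2 ^ k) (2 ^ r + 1) := by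
  intro h
  have h' := factor_eq_factor_iff.mp h 0 (by positivity)
  rw [charPow2_add_eq_zero_of_add_eq_two_pow (three_mul_two_pow_add_two_pow r) r.lt_succ_self
    (by positivity), add_zero, charPow2_two_pow] at h'
  exact zero_ne_one h'

lemma not_bordered_factor_charPow2_three_mul (r : ℕ) :
    ¬ bordered (factor charPow2 (3 * 2 ^ r) (2 ^ r + 1)) := by
  rw [bordered_factor_iff]
  rintro ⟨l, hl₀, hl, h⟩
  have h' := h (l - 1) (by omega)
  rw [charPow2_add_eq_zero_of_add_eq_two_pow (three_mul_two_pow_add_two_pow r) r.lt_succ_self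
    (by omega), show 3 * 2 ^ r + (2 ^ r + 1 - l) + (l - 1) = 2 ^ (r + 1 + 1) by
      rw [← three_mul_two_pow_add_two_pow]; omega, charPow2_two_pow] at h'
  exact zero_ne_one h'

lemma not_bordered_factor_charPow2_two_pow {k : ℕ} (hk : k ≠ r) :
    ¬ bordered (factor charPow2 (2 ^ k) (2 ^ r + 1)) := by
  rw [bordered_factor_iff]
  rintro ⟨l, hl₀, hl, h⟩
  obtain ⟨j, hj⟩ : ∃ j, 2 ^ k + (2 ^ r + 1 - l) = 2 ^ j := by
    rw [← charPow2_eq_one_iff, ← add_zero (2 ^ k + _), ← h 0 hl₀, add_zero, charPow2_two_pow]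
  have hkj : k < j := (Nat.pow_lt_pow_iff_right one_lt_two).mp (by omega)
  have hjr : j ≤ r := by
    by_contra! hrj
    have := Nat.pow_le_pow_right two_pos hrj
    have := Nat.pow_le_pow_right two_pos hkj
    have := (Nat.pow_right_injective le_rfl).ne hk
    rw [pow_succ] at *
    omega
  have := Nat.pow_le_pow_right two_pos hjr
  have h' := h (2 ^ k) (by omega)
  rw [← two_mul, ← pow_succ', charPow2_two_pow, hj, charPow2_two_pow_add_two_pow hkj] at h'
  exact one_ne_zero h'

lemma bordered_factor_charPow2_zero (hr : 2 ≤ r) : bordered (factor charPow2 0 (2 ^ r + 1)) := by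
  obtain ⟨s, rfl⟩ := Nat.exists_eq_add_of_le' hr
  have := Nat.one_lt_two_pow (n := s + 1) (by omega)
  have hs : 2 ^ (s + 2) = 2 * 2 ^ (s + 1) := pow_succ' 2 (s + 1)
  refine bordered_factor_iff.mpr ⟨2, two_pos, by omega, fun t ht => ?_⟩
  obtain rfl | rfl : t = 0 ∨ t = 1 := by omega
  · rw [charPow2_eq_zero_of_lt_of_lt (a := s + 1) (n := 0 + (2 ^ (s + 2) + 1 - 2) + 0)
      (by omega) (by omega)]
    exact charPow2_zero
  · rw [show 0 + (2 ^ (s + 2) + 1 - 2) + 1 = 2 ^ (s + 2) by omega, zero_add, ← pow_zero 2,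
      charPow2_two_pow, charPow2_two_pow]

lemma not_bordered_factor_charPow2_cases {i : ℕ} (hr : 2 ≤ r)
    (h : ¬ bordered (factor charPow2 i (2 ^ r + 1))) :
    factor charPow2 i (2 ^ r + 1) = factor charPow2 (3 * 2 ^ r) (2 ^ r + 1) ∨
      ∃ k ∈ insert (r + 1) (Finset.range r),
        factor charPow2 i (2 ^ r + 1) = factor charPow2 (2 ^ k) (2 ^ r + 1) := by
  have hne : charPow2 i ≠ charPow2 (i + 2 ^ r) :=
    fun heq => h (bordered_factor_of_apply_eq (by positivity) heq)
  by_cases hi : ∃ k, i = 2 ^ k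
  · obtain ⟨k, rfl⟩ := hi
    rcases lt_trichotomy k r with hk | rfl | hk
    · exact Or.inr ⟨k, by simp [hk], rfl⟩
    · rw [← two_mul, ← pow_succ', charPow2_two_pow, charPow2_two_pow] at hne
      exact absurd rfl hne
    · exact Or.inr ⟨r + 1, by simp, factor_charPow2_two_pow_eq hk r.lt_succ_self⟩
  · obtain ⟨t, ht⟩ : ∃ t, i + 2 ^ r = 2 ^ t := by
      by_contra ht
      rw [charPow2_eq_zero_iff.mpr hi, charPow2_eq_zero_iff.mpr ht] at hne
      exact hne rfl
    rcases le_or_gt t r with htr | htr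
    · have := Nat.pow_le_pow_right two_pos htr
      obtain rfl : i = 0 := by omega
      exact absurd (bordered_factor_charPow2_zero hr) h
    obtain ⟨s, rfl⟩ : ∃ s, t = s + 1 := ⟨t - 1, by omega⟩
    rcases Nat.lt_or_ge r s with hs | hs
    · exact Or.inl (factor_charPow2_eq_of_add_eq_two_pow hs ht)
    · obtain rfl : s = r := by omega
      exact absurd ⟨s, by rw [pow_succ] at ht; omega⟩ hi

lemma setOf_not_bordered_factor_charPow2 (hr : 2 ≤ r) :
    {w : List ℕ | (∃ i, w = factor charPow2 i (2 ^ r + 1)) ∧ ¬ bordered w} =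
      ↑(insert (factor charPow2 (3 * 2 ^ r) (2 ^ r + 1))
        ((insert (r + 1) (Finset.range r)).image fun k => factor charPow2 (2 ^ k) (2 ^ r + 1))) := by
  ext w
  simp only [Set.mem_ofPred_eq, Finset.coe_insert, Finset.coe_image, Set.mem_insert_iff,
    Set.mem_image, Finset.mem_coe]
  constructor
  · rintro ⟨⟨i, rfl⟩, h⟩
    simpa [eq_comm] using not_bordered_factor_charPow2_cases hr h
  · rintro (rfl | ⟨k, hk, rfl⟩)
    · exact ⟨⟨_, rfl⟩, not_bordered_factor_charPow2_three_mul r⟩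
    · refine ⟨⟨_, rfl⟩, not_bordered_factor_charPow2_two_pow ?_⟩
      simp only [Finset.mem_range] at hk
      omega

lemma injOn_factor_charPow2_two_pow :
    Set.InjOn (fun k => factor charPow2 (2 ^ k) (2 ^ r + 1)) ↑(insert (r + 1) (Finset.range r)) := by
  intro k hk j hj hkj
  simp only [Finset.coe_insert, Finset.coe_range, Set.mem_insert_iff, Set.mem_Iio] at hk hj
  by_contra hne
  rcases Nat.lt_or_gt_of_ne hne with h | h
  · exact factor_charPow2_two_pow_ne h (by omega) hkj
  · exact factor_charPow2_two_pow_ne h (by omega) hkj.symm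

end Length

theorem card_unbordered_charPow2 (r : ℕ) (hr : 2 ≤ r) :
    Set.ncard {w : List ℕ | (∃ i, w = factor charPow2 i (2 ^ r + 1)) ∧ ¬ bordered w} =
      r + 2 := by
  have hnotMem : factor charPow2 (3 * 2 ^ r) (2 ^ r + 1) ∉
      (insert (r + 1) (Finset.range r)).image fun k => factor charPow2 (2 ^ k) (2 ^ r + 1) := by
    simpa only [Finset.mem_image, not_exists, not_and] using
      fun k _ => (factor_charPow2_three_mul_ne r k).symm
  rw [setOf_not_bordered_factor_charPow2 hr, Set.ncard_coe_finset,
    Finset.card_insert_of_notMem hnotMem, Finset.card_image_of_injOn injOn_factor_charPow2_two_pow,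
    Finset.card_insert_of_notMem (by simp), Finset.card_range]
end

section
/- If x and y are primitive words of the same length and x^p = u·y^p·v as factors of a common word in the sense that some occurrence of x^p and some occurrence of y^p in a word z overlap in at least |x| consecutive positions with p ≥ 2, then x is a conjugate of y. Concretely: if z is a word, z[i..i+p|x|−1] = x^p, z[j..j+p|x|−1] = y^p with |x| = |y|, p ≥ 2, and |i − j| ≤ (p−1)|x|, then x and y are conjugates. -/
/- Proof idea: the occurrence of x^p at i gives z (i + s) = x[s mod |x|] for s < p|x|. If j ≥ i and
the occurrences overlap in at least |x| positions, the first block of y^p lies inside x^p, so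
y[t] = z (j + t) = x[(t + (j - i)) mod |x|]: y is x rotated by j - i. -/

theorem getElem?_wpow {A : Type*} (x : List A) {k s : ℕ} (hs : s < k * x.length) :
    (wpow x k)[s]? = x[s % x.length]? := by
  induction k generalizing s with
  | zero => simp at hs
  | succ k ih =>
    rw [Nat.succ_mul] at hs
    rw [wpow, List.getElem?_append]
    split_ifs with h
    · rw [Nat.mod_eq_of_lt h]
    · rw [ih (by omega), ← Nat.mod_eq_sub_mod (by omega)]

theorem getElem?_mod_of_factor_eq_wpow {A : Type*} {z : ℕ → A} {x : List A} {i k n s : ℕ}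
    (hx : x.length = n) (hz : factor z i (k * n) = wpow x k) (hs : s < k * n) :
    x[s % n]? = some (z (i + s)) := by
  subst hx
  rw [← getElem?_wpow x hs, ← hz]
  simp [factor, hs]

theorem rotate_eq_of_overlapping_powers {A : Type*} {z : ℕ → A} {x y : List A} {p i j n : ℕ}
    (hx : x.length = n) (hy : y.length = n) (hij : i ≤ j) (hji : j + n ≤ i + p * n)
    (hzx : factor z i (p * n) = wpow x p) (hzy : factor z j (p * n) = wpow y p) :
    x.rotate (j - i) = y := by
  refine List.ext_getElem? fun t => ?_
  by_cases ht : t < n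
  · have hzt := getElem?_mod_of_factor_eq_wpow hy hzy (s := t) (by omega)
    rw [Nat.mod_eq_of_lt ht] at hzt
    rw [List.getElem?_rotate (hx ▸ ht), hx, getElem?_mod_of_factor_eq_wpow hx hzx (by omega), hzt]
    congr 2
    omega
  · rw [List.getElem?_eq_none (by rw [List.length_rotate]; omega), List.getElem?_eq_none (by omega)]

theorem conjugate_of_isRotated {A : Type*} {x y : List A} (h : x ~r y) : conjugate x y := by
  obtain ⟨n, rfl⟩ := h
  exact ⟨_, _, (List.take_append_drop _ x).symm, List.rotate_eq_drop_append_take_mod⟩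

theorem conjugate_of_overlapping_powers_general {A : Type*} (z : ℕ → A) (x y : List A)
    (p i j : ℕ) (hlen : x.length = y.length)
    (hp : 2 ≤ p)
    (hzx : factor z i (p * x.length) = wpow x p)
    (hzy : factor z j (p * x.length) = wpow y p)
    (hij : i ≤ j + (p - 1) * x.length) (hji : j ≤ i + (p - 1) * x.length) :
    conjugate x y := by
  have hpn : (p - 1) * x.length + x.length = p * x.length := by
    rw [← Nat.succ_mul, Nat.succ_eq_add_one, Nat.sub_add_cancel (by omega)]
  apply conjugate_of_isRotated
  rcases le_total i j with h | h
  · exact ⟨_, rotate_eq_of_overlapping_powers rfl hlen.symm h (by omega) hzx hzy⟩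
  · exact List.IsRotated.symm
      ⟨_, rotate_eq_of_overlapping_powers hlen.symm rfl h (by omega) hzy hzx⟩

theorem conjugate_of_overlapping_powers {A : Type*} (z : ℕ → A) (x y : List A)
    (p i j : ℕ) (hx : primitive x) (hy : primitive y) (hlen : x.length = y.length)
    (hp : 2 ≤ p)
    (hzx : factor z i (p * x.length) = wpow x p)
    (hzy : factor z j (p * x.length) = wpow y p)
    (hij : i ≤ j + (p - 1) * x.length) (hji : j ≤ i + (p - 1) * x.length) :
    conjugate x y :=
  conjugate_of_overlapping_powers_general z x y p i j hlen hp hzx hzy hij hji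
end
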